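/- Let (X,Y) have the Lancaster density f(x,y) = f₁(x) f₂(y)(1 + Σₙ ρₙ φₙ(x) ψₙ(y)) with Σₙ |ρₙ| cₙ dₙ ≤ 1. Then for every n ≥ 1, E(φₙ(X) | Y) = ρₙ ψₙ(Y) almost surely and E(ψₙ(Y) | X) = ρₙ φₙ(X) almost surely. -/

import Mathlib

open MeasureTheory ProbabilityTheory Real
open scoped ENNReal

noncomputable def covar {Ω : Type*} [MeasurableSpace Ω] (μ : Measure Ω) (X Y : Ω → ℝ) : ℝ :=
  ∫ ω, (X ω - ∫ a, X a ∂μ) * (Y ω - ∫ a, Y a ∂μ) ∂μ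

noncomputable def pearson {Ω : Type*} [MeasurableSpace Ω] (μ : Measure Ω) (X Y : Ω → ℝ) : ℝ :=
  covar μ X Y / (Real.sqrt (variance X μ) * Real.sqrt (variance Y μ))

noncomputable def maxCorr {Ω : Type*} [MeasurableSpace Ω] (μ : Measure Ω) (X Y : Ω → ℝ) : ℝ :=
  sSup { r : ℝ | ∃ g₁ g₂ : ℝ → ℝ, Measurable g₁ ∧ Measurable g₂ ∧
    MemLp (g₁ ∘ X) 2 μ ∧ MemLp (g₂ ∘ Y) 2 μ ∧
    0 < variance (g₁ ∘ X) μ ∧ 0 < variance (g₂ ∘ Y) μ ∧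
    r = pearson μ (g₁ ∘ X) (g₂ ∘ Y) }

/-- `g` is a probability density on `ℝ` supported in `[a, b]`. -/
def IsDensityOn (g : ℝ → ℝ) (a b : ℝ) : Prop :=
  (∀ x, 0 ≤ g x) ∧ (∀ x, x ∉ Set.Icc a b → g x = 0) ∧ (∫ x, g x = 1)

/-- `φ` is the orthonormal polynomial system of the density `g`:
degree `n`, positive leading coefficients, orthonormal in `L²(g dx)`. -/
def OrthonormalPolys (g : ℝ → ℝ) (φ : ℕ → Polynomial ℝ) : Prop :=
  (∀ n, (φ n).natDegree = n) ∧ (∀ n, 0 < (φ n).leadingCoeff) ∧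
  (∀ m n, ∫ x, (φ m).eval x * (φ n).eval x * g x = if m = n then 1 else 0)

/-- The Lancaster density `f(x,y) = f₁(x) f₂(y) (1 + Σₙ≥₁ ρₙ φₙ(x) ψₙ(y))`. -/
noncomputable def lancaster (f₁ f₂ : ℝ → ℝ) (φ ψ : ℕ → Polynomial ℝ) (ρ : ℕ → ℝ)
    (x y : ℝ) : ℝ :=
  f₁ x * f₂ y * (1 + ∑' n : ℕ, ρ (n + 1) * (φ (n + 1)).eval x * (ψ (n + 1)).eval y)

/-!
Since `φ₀ = ψ₀ = 1`, the Lancaster density is `Σₖ ρₖ φₖ(x) f₁(x) ψₖ(y) f₂(y)` with `ρ₀ = 1`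
(encoded as `Function.update ρ 0 1`). On the support rectangle the `k`-th term is bounded by
`|ρₖ| cₖ dₖ f₁(x) f₂(y)`, so against `g(x) h(y)` with `g, h` bounded the series integrates term by
term, and orthonormality of `(φₖ)` leaves `E[φₘ(X) h(Y)] = ρₘ ∫ h ψₘ f₂`. Taking `m = n` with
`h = 1_B`, and `m = 0` with `h = 1_B ψₙ`, gives `E[φₙ(X); Y ∈ B] = E[ρₙ ψₙ(Y); Y ∈ B]`, which
characterises `E(φₙ(X) | Y)`. The density is symmetric under exchanging `(x, φ, f₁)` and
`(y, ψ, f₂)`, which gives the second identity.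
-/

open Set

theorem IsDensityOn.integrable {g : ℝ → ℝ} {a b : ℝ} (hg : IsDensityOn g a b) : Integrable g :=
  .of_integral_ne_zero (hg.2.2 ▸ one_ne_zero)

theorem IsDensityOn.abs_mul_le {g u : ℝ → ℝ} {a b M : ℝ} (hg : IsDensityOn g a b)
    (hu : ∀ x ∈ Icc a b, |u x| ≤ M) (x : ℝ) : |u x * g x| ≤ M * g x := by
  by_cases hx : x ∈ Icc a b
  · rw [abs_mul, abs_of_nonneg (hg.1 x)]
    exact mul_le_mul_of_nonneg_right (hu x hx) (hg.1 x)
  · simp [hg.2.1 x hx]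

theorem IsDensityOn.integrable_mul {g u : ℝ → ℝ} {a b M : ℝ} (hg : IsDensityOn g a b)
    (hgm : Measurable g) (hum : Measurable u) (hu : ∀ x ∈ Icc a b, |u x| ≤ M) :
    Integrable fun x => u x * g x :=
  (hg.integrable.const_mul M).mono' (hum.mul hgm).aestronglyMeasurable
    (ae_of_all _ (hg.abs_mul_le hu))

theorem IsDensityOn.integral_abs_mul_le {g u : ℝ → ℝ} {a b M : ℝ} (hg : IsDensityOn g a b)
    (hu : ∀ x ∈ Icc a b, |u x| ≤ M) : ∫ x, |u x * g x| ≤ M := by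
  calc ∫ x, |u x * g x| ≤ ∫ x, M * g x :=
        integral_mono_of_nonneg (ae_of_all _ fun _ => abs_nonneg _)
          (hg.integrable.const_mul M) (ae_of_all _ (hg.abs_mul_le hu))
    _ = M := by rw [integral_const_mul, hg.2.2, mul_one]

theorem abs_eval_le_sSup_image (P : Polynomial ℝ) {a b x : ℝ} (hx : x ∈ Icc a b) :
    |P.eval x| ≤ sSup ((fun x => |P.eval x|) '' Icc a b) :=
  le_csSup (isCompact_Icc.image P.continuous.abs).bddAbove ⟨x, hx, rfl⟩

theorem OrthonormalPolys.zero_eq_one {g : ℝ → ℝ} {a b : ℝ} {φ : ℕ → Polynomial ℝ}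
    (hφ : OrthonormalPolys g φ) (hg : IsDensityOn g a b) : φ 0 = 1 := by
  obtain ⟨r, hr⟩ := Polynomial.natDegree_eq_zero.mp (hφ.1 0)
  have hpos : 0 < r := by simpa [← hr] using hφ.2.1 0
  have hnorm := hφ.2.2 0 0
  simp only [← hr, Polynomial.eval_C, if_true, integral_const_mul, hg.2.2, mul_one] at hnorm
  have : r = 1 := by nlinarith
  rw [← hr, this, Polynomial.C_1]

theorem integral_tsum_mul_prod {α β ι : Type*} [MeasurableSpace α] [MeasurableSpace β]
    {μ : Measure α} {ν : Measure β} [SFinite μ] [SFinite ν] [Countable ι] (a : ι → ℝ)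
    {u : ι → α → ℝ} {v : ι → β → ℝ} (hu : ∀ i, Integrable (u i) μ) (hv : ∀ i, Integrable (v i) ν)
    (hs : Summable fun i => |a i| * (∫ x, |u i x| ∂μ) * ∫ y, |v i y| ∂ν) :
    ∫ p, ∑' i, a i * u i p.1 * v i p.2 ∂μ.prod ν =
      ∑' i, a i * (∫ x, u i x ∂μ) * ∫ y, v i y ∂ν := by
  have hint : ∀ i, Integrable (fun p : α × β => a i * u i p.1 * v i p.2) (μ.prod ν) := fun i => by
    simpa only [mul_assoc] using ((hu i).mul_prod (hv i)).const_mul (a i)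
  have hnorm : ∀ i, ∫ p, ‖a i * u i p.1 * v i p.2‖ ∂μ.prod ν =
      |a i| * (∫ x, |u i x| ∂μ) * ∫ y, |v i y| ∂ν := fun i => by
    simp only [norm_mul, Real.norm_eq_abs, mul_assoc, integral_const_mul]
    exact congrArg _ (integral_prod_mul (fun x => |u i x|) (fun y => |v i y|))
  rw [← integral_tsum_of_summable_integral_norm hint (by simpa only [hnorm] using hs)]
  congr 1 with i
  simp only [mul_assoc, integral_const_mul]
  exact congrArg _ (integral_prod_mul (u i) (v i))

theorem one_add_tsum_eq_tsum_update {a : ℕ → ℝ} (ha : Summable fun n => a (n + 1)) :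
    1 + ∑' n, a (n + 1) = ∑' n, Function.update a 0 1 n := by
  have hs : Summable (Function.update a 0 1) := (summable_nat_add_iff 1).mp (by simpa using ha)
  rw [hs.tsum_eq_zero_add]
  simp

theorem ae_mem_of_map_eq_withDensity {Ω α : Type*} [MeasurableSpace Ω] [MeasurableSpace α]
    {μ : Measure Ω} {ν : Measure α} {Z : Ω → α} (hZ : AEMeasurable Z μ) {F : α → ℝ≥0∞}
    (hF : Measurable F) (hZF : Measure.map Z μ = ν.withDensity F) {S : Set α}
    (hFS : ∀ a ∉ S, F a = 0) : ∀ᵐ ω ∂μ, Z ω ∈ S := by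
  refine ae_of_ae_map hZ ?_
  rw [hZF, ae_withDensity_iff hF]
  exact ae_of_all _ fun a ha => not_not.mp fun haS => ha (hFS a haS)

theorem integral_comp_eq_integral_mul_of_map_eq_withDensity {Ω α : Type*} [MeasurableSpace Ω]
    [MeasurableSpace α] {μ : Measure Ω} {ν : Measure α} {Z : Ω → α} (hZ : AEMeasurable Z μ)
    {F : α → ℝ} (hF : Measurable F) (hF₀ : ∀ a, 0 ≤ F a)
    (hZF : Measure.map Z μ = ν.withDensity fun a => ENNReal.ofReal (F a)) {g : α → ℝ}
    (hg : Measurable g) : ∫ ω, g (Z ω) ∂μ = ∫ a, g a * F a ∂ν := by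
  rw [← integral_map hZ hg.aestronglyMeasurable, hZF,
    integral_withDensity_eq_integral_toReal_smul hF.ennreal_ofReal
      (ae_of_all _ fun _ => ENNReal.ofReal_lt_top)]
  congr 1 with a
  rw [ENNReal.toReal_ofReal (hF₀ a), smul_eq_mul, mul_comm]

theorem setIntegral_preimage_eq_integral_mul_indicator {Ω : Type*} [MeasurableSpace Ω]
    {μ : Measure Ω} {Y : Ω → ℝ} (hY : Measurable Y) {B : Set ℝ} (hB : MeasurableSet B)
    (F : Ω → ℝ) : ∫ ω in Y ⁻¹' B, F ω ∂μ = ∫ ω, F ω * B.indicator 1 (Y ω) ∂μ := by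
  rw [← integral_indicator (hY hB)]
  congr 1 with ω
  by_cases hω : Y ω ∈ B <;> simp [hω, Set.indicator_of_mem, Set.indicator_of_notMem]

section Lancaster

variable {f₁ f₂ : ℝ → ℝ} {α₁ ω₁ α₂ ω₂ : ℝ} {φ ψ : ℕ → Polynomial ℝ} {c d ρ : ℕ → ℝ}

theorem abs_mul_eval_mul_eval_le (hc : ∀ n, ∀ x ∈ Icc α₁ ω₁, |(φ n).eval x| ≤ c n)
    (hd : ∀ n, ∀ y ∈ Icc α₂ ω₂, |(ψ n).eval y| ≤ d n) {x y : ℝ} (hx : x ∈ Icc α₁ ω₁)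
    (hy : y ∈ Icc α₂ ω₂) (n : ℕ) :
    |ρ n * (φ n).eval x * (ψ n).eval y| ≤ |ρ n| * c n * d n := by
  have hcn := hc n x hx
  rw [abs_mul, abs_mul]
  gcongr
  · exact mul_nonneg (abs_nonneg _) ((abs_nonneg _).trans hcn)
  · exact hd n y hy

theorem lancaster_eq_zero_of_notMem (hf₁ : IsDensityOn f₁ α₁ ω₁) (hf₂ : IsDensityOn f₂ α₂ ω₂)
    {x y : ℝ} (hxy : (x, y) ∉ Icc α₁ ω₁ ×ˢ Icc α₂ ω₂) : lancaster f₁ f₂ φ ψ ρ x y = 0 := by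
  rcases not_and_or.mp hxy with hx | hy
  · simp [lancaster, hf₁.2.1 x hx]
  · simp [lancaster, hf₂.2.1 y hy]

theorem lancaster_nonneg (hf₁ : IsDensityOn f₁ α₁ ω₁) (hf₂ : IsDensityOn f₂ α₂ ω₂)
    (hc : ∀ n, ∀ x ∈ Icc α₁ ω₁, |(φ n).eval x| ≤ c n)
    (hd : ∀ n, ∀ y ∈ Icc α₂ ω₂, |(ψ n).eval y| ≤ d n)
    (hsum : Summable fun n : ℕ => |ρ (n + 1)| * c (n + 1) * d (n + 1))
    (hρ : ∑' n : ℕ, |ρ (n + 1)| * c (n + 1) * d (n + 1) ≤ 1) (x y : ℝ) :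
    0 ≤ lancaster f₁ f₂ φ ψ ρ x y := by
  by_cases hxy : (x, y) ∈ Icc α₁ ω₁ ×ˢ Icc α₂ ω₂
  · have hS : ‖∑' n : ℕ, ρ (n + 1) * (φ (n + 1)).eval x * (ψ (n + 1)).eval y‖ ≤ 1 :=
      (tsum_of_norm_bounded hsum.hasSum
        fun n => abs_mul_eval_mul_eval_le hc hd hxy.1 hxy.2 (n + 1)).trans hρ
    exact mul_nonneg (mul_nonneg (hf₁.1 x) (hf₂.1 y))
      (by linarith [neg_le_of_abs_le ((Real.norm_eq_abs _).symm.trans_le hS)])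
  · exact (lancaster_eq_zero_of_notMem hf₁ hf₂ hxy).ge

theorem lancaster_eq_tsum (hf₁ : IsDensityOn f₁ α₁ ω₁) (hf₂ : IsDensityOn f₂ α₂ ω₂)
    (hφ₀ : φ 0 = 1) (hψ₀ : ψ 0 = 1) (hc : ∀ n, ∀ x ∈ Icc α₁ ω₁, |(φ n).eval x| ≤ c n)
    (hd : ∀ n, ∀ y ∈ Icc α₂ ω₂, |(ψ n).eval y| ≤ d n)
    (hsum : Summable fun n : ℕ => |ρ (n + 1)| * c (n + 1) * d (n + 1)) (x y : ℝ) :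
    lancaster f₁ f₂ φ ψ ρ x y =
      ∑' n, Function.update ρ 0 1 n * ((φ n).eval x * f₁ x) * ((ψ n).eval y * f₂ y) := by
  by_cases hxy : (x, y) ∈ Icc α₁ ω₁ ×ˢ Icc α₂ ω₂
  · have hs : Summable fun n : ℕ => ρ (n + 1) * (φ (n + 1)).eval x * (ψ (n + 1)).eval y :=
      hsum.of_norm_bounded fun n => abs_mul_eval_mul_eval_le hc hd hxy.1 hxy.2 (n + 1)
    rw [lancaster,
      one_add_tsum_eq_tsum_update (a := fun n => ρ n * (φ n).eval x * (ψ n).eval y) hs,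
      ← tsum_mul_left]
    congr 1 with n
    rcases n with _ | n
    · simp [hφ₀, hψ₀]
    · simp only [ne_eq, Nat.succ_ne_zero, not_false_eq_true, Function.update_of_ne]
      ring
  · rw [lancaster_eq_zero_of_notMem hf₁ hf₂ hxy]
    rcases not_and_or.mp hxy with hx | hy
    · simp [hf₁.2.1 x hx]
    · simp [hf₂.2.1 y hy]

theorem measurable_lancaster (hm₁ : Measurable f₁) (hm₂ : Measurable f₂) :
    Measurable fun p : ℝ × ℝ => lancaster f₁ f₂ φ ψ ρ p.1 p.2 := by
  unfold lancaster
  fun_prop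

theorem lancaster_swap (x y : ℝ) :
    lancaster f₁ f₂ φ ψ ρ x y = lancaster f₂ f₁ ψ φ ρ y x := by
  simp only [lancaster, mul_right_comm _ ((φ _).eval x), mul_comm (f₁ x)]


theorem integral_mul_lancaster (hf₁ : IsDensityOn f₁ α₁ ω₁) (hf₂ : IsDensityOn f₂ α₂ ω₂)
    (hm₁ : Measurable f₁) (hm₂ : Measurable f₂) (hφ₀ : φ 0 = 1) (hψ₀ : ψ 0 = 1)
    (hc : ∀ n, ∀ x ∈ Icc α₁ ω₁, |(φ n).eval x| ≤ c n)
    (hd : ∀ n, ∀ y ∈ Icc α₂ ω₂, |(ψ n).eval y| ≤ d n)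
    (hsum : Summable fun n : ℕ => |ρ (n + 1)| * c (n + 1) * d (n + 1))
    {g h : ℝ → ℝ} (hgm : Measurable g) (hhm : Measurable h) {M C : ℝ}
    (hg : ∀ x ∈ Icc α₁ ω₁, |g x| ≤ M) (hh : ∀ y ∈ Icc α₂ ω₂, |h y| ≤ C) :
    ∫ p : ℝ × ℝ, g p.1 * h p.2 * lancaster f₁ f₂ φ ψ ρ p.1 p.2 =
      ∑' n, Function.update ρ 0 1 n * (∫ x, g x * (φ n).eval x * f₁ x) *
        ∫ y, h y * (ψ n).eval y * f₂ y := by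
  have hgφ : ∀ n, ∀ x ∈ Icc α₁ ω₁, |g x * (φ n).eval x| ≤ M * c n := fun n x hx => by
    rw [abs_mul]
    exact mul_le_mul (hg x hx) (hc n x hx) (abs_nonneg _) ((abs_nonneg _).trans (hg x hx))
  have hhψ : ∀ n, ∀ y ∈ Icc α₂ ω₂, |h y * (ψ n).eval y| ≤ C * d n := fun n y hy => by
    rw [abs_mul]
    exact mul_le_mul (hh y hy) (hd n y hy) (abs_nonneg _) ((abs_nonneg _).trans (hh y hy))
  have hs : Summable fun n => |Function.update ρ 0 1 n| * c n * d n :=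
    (summable_nat_add_iff 1).mp (by simpa using hsum)
  have hbound : ∀ n, |Function.update ρ 0 1 n| * (∫ x, |g x * (φ n).eval x * f₁ x|) *
      ∫ y, |h y * (ψ n).eval y * f₂ y| ≤ |Function.update ρ 0 1 n| * c n * d n * (M * C) :=
    fun n => by
    have h1 := hf₁.integral_abs_mul_le (hgφ n)
    have h2 := hf₂.integral_abs_mul_le (hhψ n)
    calc _ ≤ |Function.update ρ 0 1 n| * (M * c n) * (C * d n) := by
          gcongr
          exact mul_nonneg (abs_nonneg _) ((integral_nonneg fun _ => abs_nonneg _).trans h1)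
    _ = _ := by ring
  calc ∫ p : ℝ × ℝ, g p.1 * h p.2 * lancaster f₁ f₂ φ ψ ρ p.1 p.2
      = ∫ p : ℝ × ℝ, ∑' n, Function.update ρ 0 1 n * (g p.1 * (φ n).eval p.1 * f₁ p.1) *
          (h p.2 * (ψ n).eval p.2 * f₂ p.2) := by
        congr 1 with p
        rw [lancaster_eq_tsum hf₁ hf₂ hφ₀ hψ₀ hc hd hsum, ← tsum_mul_left]
        congr 1 with n
        ring
    _ = _ := by
        rw [Measure.volume_eq_prod]
        exact integral_tsum_mul_prod _
          (fun n => hf₁.integrable_mul hm₁ (by fun_prop) (hgφ n))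
          (fun n => hf₂.integrable_mul hm₂ (by fun_prop) (hhψ n))
          (Summable.of_nonneg_of_le (fun n => by positivity) hbound (hs.mul_right _))
theorem integral_eval_mul_lancaster (hf₁ : IsDensityOn f₁ α₁ ω₁) (hf₂ : IsDensityOn f₂ α₂ ω₂)
    (hm₁ : Measurable f₁) (hm₂ : Measurable f₂) (hφ : OrthonormalPolys f₁ φ) (hψ₀ : ψ 0 = 1)
    (hc : ∀ n, ∀ x ∈ Icc α₁ ω₁, |(φ n).eval x| ≤ c n)
    (hd : ∀ n, ∀ y ∈ Icc α₂ ω₂, |(ψ n).eval y| ≤ d n)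
    (hsum : Summable fun n : ℕ => |ρ (n + 1)| * c (n + 1) * d (n + 1))
    (m : ℕ) {h : ℝ → ℝ} (hhm : Measurable h) {C : ℝ} (hh : ∀ y ∈ Icc α₂ ω₂, |h y| ≤ C) :
    ∫ p : ℝ × ℝ, (φ m).eval p.1 * h p.2 * lancaster f₁ f₂ φ ψ ρ p.1 p.2 =
      Function.update ρ 0 1 m * ∫ y, h y * (ψ m).eval y * f₂ y := by
  rw [integral_mul_lancaster hf₁ hf₂ hm₁ hm₂ (hφ.zero_eq_one hf₁) hψ₀ hc hd hsum
    (φ m).continuous.measurable hhm (hc m) hh, tsum_eq_single m fun n hn => by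
      rw [hφ.2.2 m n, if_neg (Ne.symm hn), mul_zero, zero_mul], hφ.2.2 m m, if_pos rfl, mul_one]

theorem integral_swap_mul_lancaster (g : ℝ × ℝ → ℝ) :
    ∫ p : ℝ × ℝ, g p.swap * lancaster f₁ f₂ φ ψ ρ p.1 p.2 =
      ∫ p : ℝ × ℝ, g p * lancaster f₂ f₁ ψ φ ρ p.1 p.2 := by
  rw [Measure.volume_eq_prod, ← integral_prod_swap]
  simp only [Prod.fst_swap, Prod.snd_swap, Prod.swap_swap]
  simp_rw [lancaster_swap (f₁ := f₁)]

theorem condExp_eval_comap_eq_of_lancaster {Ω : Type*} [MeasurableSpace Ω] {μ : Measure Ω}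
    [IsFiniteMeasure μ] {X Y : Ω → ℝ} (hX : Measurable X) (hY : Measurable Y)
    (hf₁ : IsDensityOn f₁ α₁ ω₁) (hf₂ : IsDensityOn f₂ α₂ ω₂)
    (hm₁ : Measurable f₁) (hm₂ : Measurable f₂)
    (hφ : OrthonormalPolys f₁ φ) (hψ : OrthonormalPolys f₂ ψ)
    (hc : ∀ n, ∀ x ∈ Icc α₁ ω₁, |(φ n).eval x| ≤ c n)
    (hd : ∀ n, ∀ y ∈ Icc α₂ ω₂, |(ψ n).eval y| ≤ d n)
    (hsum : Summable fun n : ℕ => |ρ (n + 1)| * c (n + 1) * d (n + 1))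
    (hXY : ∀ᵐ ω ∂μ, X ω ∈ Icc α₁ ω₁ ∧ Y ω ∈ Icc α₂ ω₂)
    (hlaw : ∀ g : ℝ × ℝ → ℝ, Measurable g →
      ∫ ω, g (X ω, Y ω) ∂μ = ∫ p, g p * lancaster f₁ f₂ φ ψ ρ p.1 p.2)
    {n : ℕ} (hn : n ≠ 0) :
    μ[fun ω => (φ n).eval (X ω) | MeasurableSpace.comap Y inferInstance]
      =ᵐ[μ] fun ω => ρ n * (ψ n).eval (Y ω) := by
  have hφ₀ := hφ.zero_eq_one hf₁
  have hψ₀ := hψ.zero_eq_one hf₂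
  have hφX : Integrable (fun ω => (φ n).eval (X ω)) μ :=
    .of_bound (by fun_prop : Measurable _).aestronglyMeasurable (c n)
      (hXY.mono fun ω h => (Real.norm_eq_abs _).trans_le (hc n _ h.1))
  have hψY : Integrable (fun ω => ρ n * (ψ n).eval (Y ω)) μ :=
    (Integrable.of_bound (by fun_prop : Measurable _).aestronglyMeasurable (d n)
      (hXY.mono fun ω h => (Real.norm_eq_abs _).trans_le (hd n _ h.2))).const_mul (ρ n)
  refine (ae_eq_condExp_of_forall_setIntegral_eq hY.comap_le hφX
    (fun _ _ _ => hψY.integrableOn) ?_ ?_).symm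
  · rintro _ ⟨B, hB, rfl⟩ -
    have hBm : Measurable (B.indicator (1 : ℝ → ℝ)) := measurable_one.indicator hB
    have hB1 : ∀ y ∈ Icc α₂ ω₂, |B.indicator (1 : ℝ → ℝ) y| ≤ 1 := fun y _ => by
      by_cases hy : y ∈ B <;> simp [hy]
    have hBψ : ∀ y ∈ Icc α₂ ω₂, |B.indicator (1 : ℝ → ℝ) y * (ψ n).eval y| ≤ 1 * d n :=
      fun y hy => by
      rw [abs_mul]
      exact mul_le_mul (hB1 y hy) (hd n y hy) (abs_nonneg _) zero_le_one
    rw [setIntegral_preimage_eq_integral_mul_indicator hY hB,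
      setIntegral_preimage_eq_integral_mul_indicator hY hB]
    calc ∫ ω, ρ n * (ψ n).eval (Y ω) * B.indicator 1 (Y ω) ∂μ
        = ρ n * ∫ ω, (φ 0).eval (X ω) * (B.indicator 1 (Y ω) * (ψ n).eval (Y ω)) ∂μ := by
          rw [← integral_const_mul]
          congr 1 with ω
          rw [hφ₀, Polynomial.eval_one]
          ring
      _ = ρ n * ∫ p : ℝ × ℝ, (φ 0).eval p.1 * (B.indicator 1 p.2 * (ψ n).eval p.2) *
            lancaster f₁ f₂ φ ψ ρ p.1 p.2 :=
          congrArg _ (hlaw (fun p => (φ 0).eval p.1 * (B.indicator 1 p.2 * (ψ n).eval p.2))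
            (by fun_prop))
      _ = ∫ p : ℝ × ℝ, (φ n).eval p.1 * B.indicator 1 p.2 * lancaster f₁ f₂ φ ψ ρ p.1 p.2 := by
          rw [integral_eval_mul_lancaster hf₁ hf₂ hm₁ hm₂ hφ hψ₀ hc hd hsum 0 (by fun_prop) hBψ,
            integral_eval_mul_lancaster hf₁ hf₂ hm₁ hm₂ hφ hψ₀ hc hd hsum n hBm hB1,
            Function.update_self, Function.update_of_ne hn, hψ₀]
          simp only [Polynomial.eval_one, mul_one, one_mul]
      _ = ∫ ω, (φ n).eval (X ω) * B.indicator 1 (Y ω) ∂μ :=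
          (hlaw (fun p => (φ n).eval p.1 * B.indicator 1 p.2) (by fun_prop)).symm
  · exact ((by fun_prop : Measurable fun y => ρ n * (ψ n).eval y).comp
      (Measurable.of_comap_le le_rfl)).aestronglyMeasurable

end Lancaster

theorem stmt6_general {Ω : Type*} [MeasurableSpace Ω] (μ : Measure Ω) [IsProbabilityMeasure μ]
    (X Y : Ω → ℝ) (hX : Measurable X) (hY : Measurable Y)
    (α₁ ω₁ α₂ ω₂ : ℝ)
    (f₁ f₂ : ℝ → ℝ) (hf₁ : IsDensityOn f₁ α₁ ω₁) (hf₂ : IsDensityOn f₂ α₂ ω₂)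
    (hm₁ : Measurable f₁) (hm₂ : Measurable f₂)
    (φ ψ : ℕ → Polynomial ℝ)
    (hφ : OrthonormalPolys f₁ φ) (hψ : OrthonormalPolys f₂ ψ)
    (c d : ℕ → ℝ)
    (hc : ∀ n, c n = sSup ((fun x => |(φ n).eval x|) '' Set.Icc α₁ ω₁))
    (hd : ∀ n, d n = sSup ((fun y => |(ψ n).eval y|) '' Set.Icc α₂ ω₂))
    (ρ : ℕ → ℝ)
    (hsum : Summable fun n : ℕ => |ρ (n + 1)| * c (n + 1) * d (n + 1))
    (hρ : ∑' n : ℕ, |ρ (n + 1)| * c (n + 1) * d (n + 1) ≤ 1)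
    (hjoint : Measure.map (fun ω => (X ω, Y ω)) μ =
      (volume : Measure (ℝ × ℝ)).withDensity
        (fun p => ENNReal.ofReal (lancaster f₁ f₂ φ ψ ρ p.1 p.2))) :
    ∀ n : ℕ, 1 ≤ n →
      (μ[(fun ω => (φ n).eval (X ω)) | MeasurableSpace.comap Y inferInstance]
          =ᵐ[μ] fun ω => ρ n * (ψ n).eval (Y ω)) ∧
      (μ[(fun ω => (ψ n).eval (Y ω)) | MeasurableSpace.comap X inferInstance]
          =ᵐ[μ] fun ω => ρ n * (φ n).eval (X ω)) := by
  intro n hn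
  have hn₀ : n ≠ 0 := Nat.one_le_iff_ne_zero.mp hn
  have hc' : ∀ n, ∀ x ∈ Icc α₁ ω₁, |(φ n).eval x| ≤ c n := fun n x hx =>
    (hc n).symm ▸ abs_eval_le_sSup_image _ hx
  have hd' : ∀ n, ∀ y ∈ Icc α₂ ω₂, |(ψ n).eval y| ≤ d n := fun n y hy =>
    (hd n).symm ▸ abs_eval_le_sSup_image _ hy
  have hL := measurable_lancaster (φ := φ) (ψ := ψ) (ρ := ρ) hm₁ hm₂
  have hXY : ∀ᵐ ω ∂μ, X ω ∈ Icc α₁ ω₁ ∧ Y ω ∈ Icc α₂ ω₂ :=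
    ae_mem_of_map_eq_withDensity (hX.prodMk hY).aemeasurable hL.ennreal_ofReal hjoint
      fun p hp => by rw [lancaster_eq_zero_of_notMem hf₁ hf₂ hp, ENNReal.ofReal_zero]
  have hlaw : ∀ g : ℝ × ℝ → ℝ, Measurable g →
      ∫ ω, g (X ω, Y ω) ∂μ = ∫ p, g p * lancaster f₁ f₂ φ ψ ρ p.1 p.2 := fun g hg =>
    integral_comp_eq_integral_mul_of_map_eq_withDensity (hX.prodMk hY).aemeasurable hL
      (fun p => lancaster_nonneg hf₁ hf₂ hc' hd' hsum hρ p.1 p.2) hjoint hg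
  have hlaw' : ∀ g : ℝ × ℝ → ℝ, Measurable g →
      ∫ ω, g (Y ω, X ω) ∂μ = ∫ p, g p * lancaster f₂ f₁ ψ φ ρ p.1 p.2 := fun g hg =>
    (hlaw (fun p => g p.swap) (hg.comp measurable_swap)).trans (integral_swap_mul_lancaster g)
  exact ⟨condExp_eval_comap_eq_of_lancaster hX hY hf₁ hf₂ hm₁ hm₂ hφ hψ hc' hd' hsum hXY hlaw hn₀,
    condExp_eval_comap_eq_of_lancaster hY hX hf₂ hf₁ hm₂ hm₁ hψ hφ hd' hc'
      (by simpa only [mul_right_comm] using hsum) (hXY.mono fun _ h => h.symm) hlaw' hn₀⟩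

/-- If `(X,Y)` has the Lancaster density, then for every `n ≥ 1`,
`E(φₙ(X)|Y) = ρₙ ψₙ(Y)` a.s. and `E(ψₙ(Y)|X) = ρₙ φₙ(X)` a.s. -/
theorem stmt6 {Ω : Type*} [MeasurableSpace Ω] (μ : Measure Ω) [IsProbabilityMeasure μ]
    (X Y : Ω → ℝ) (hX : Measurable X) (hY : Measurable Y)
    (α₁ ω₁ α₂ ω₂ : ℝ) (h₁ : α₁ < ω₁) (h₂ : α₂ < ω₂)
    (f₁ f₂ : ℝ → ℝ) (hf₁ : IsDensityOn f₁ α₁ ω₁) (hf₂ : IsDensityOn f₂ α₂ ω₂)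
    (hm₁ : Measurable f₁) (hm₂ : Measurable f₂)
    (φ ψ : ℕ → Polynomial ℝ)
    (hφ : OrthonormalPolys f₁ φ) (hψ : OrthonormalPolys f₂ ψ)
    (c d : ℕ → ℝ)
    (hc : ∀ n, c n = sSup ((fun x => |(φ n).eval x|) '' Set.Icc α₁ ω₁))
    (hd : ∀ n, d n = sSup ((fun y => |(ψ n).eval y|) '' Set.Icc α₂ ω₂))
    (ρ : ℕ → ℝ)
    (hsum : Summable fun n : ℕ => |ρ (n + 1)| * c (n + 1) * d (n + 1))
    (hρ : ∑' n : ℕ, |ρ (n + 1)| * c (n + 1) * d (n + 1) ≤ 1)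
    (hjoint : Measure.map (fun ω => (X ω, Y ω)) μ =
      (volume : Measure (ℝ × ℝ)).withDensity
        (fun p => ENNReal.ofReal (lancaster f₁ f₂ φ ψ ρ p.1 p.2))) :
    ∀ n : ℕ, 1 ≤ n →
      (μ[(fun ω => (φ n).eval (X ω)) | MeasurableSpace.comap Y inferInstance]
          =ᵐ[μ] fun ω => ρ n * (ψ n).eval (Y ω)) ∧
      (μ[(fun ω => (ψ n).eval (Y ω)) | MeasurableSpace.comap X inferInstance]
          =ᵐ[μ] fun ω => ρ n * (φ n).eval (X ω)) :=
  stmt6_general μ X Y hX hY α₁ ω₁ α₂ ω₂ f₁ f₂ hf₁ hf₂ hm₁ hm₂ φ ψ hφ hψ c d hc hd ρ hsum hρ hjoint
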